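/- arXiv:1304.7539 — 2 statements merged into one kernel-verified Lean document; each statement's English description precedes it below -/
import Mathlib

section
/- Let Θ ⊆ ℝ^K be open, let x : Θ → ℂ^N be differentiable at θ ∈ Θ, let σ > 0, and for any matrix Φ ∈ ℂ^{L×N} define the Fisher information matrix F(Φ,θ) ∈ ℝ^{K×K} by F(Φ,θ)_{m,n} = (2/σ²)·Re⟨Φ ∂x(θ)/∂θ_m, Φ ∂x(θ)/∂θ_n⟩. Suppose A ∈ ℂ^{M×N} satisfies the tangent plane ε-isometry property at θ (with 0 < ε < 1). Then for every a ∈ ℝ^K, (M/N)(1−ε)² · aᵀ F(I_N,θ) a ≤ aᵀ F(A,θ) a ≤ (M/N)(1+ε)² · aᵀ F(I_N,θ) a; equivalently, F(√(M/N)(1−ε) I_N, θ) ⪯ F(A,θ) ⪯ F(√(M/N)(1+ε) I_N, θ) in the Loewner (positive semidefinite) order. -/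
/-!
The Fisher quadratic form is a squared norm: `aᵀ F(Φ,θ) a = (2/σ²) ‖Φ v‖²` with
`v = ∑ₖ aₖ ∂x(θ)/∂θₖ` a tangent vector, so squaring the two-sided isometry bound on `‖A v‖ / ‖v‖`
sandwiches `aᵀ F(A,θ) a` between multiples of `aᵀ F(I,θ) a = (2/σ²) ‖v‖²`.
-/

open scoped BigOperators

/-- Action of an `M × N` complex matrix on `ℂ^N` with Euclidean norms. -/
noncomputable def mulVecE {M N : ℕ} (A : Matrix (Fin M) (Fin N) ℂ)
    (v : EuclideanSpace ℂ (Fin N)) : EuclideanSpace ℂ (Fin M) :=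
  WithLp.toLp 2 (fun i => ∑ j, A i j * v j)

/-- Fisher information matrix entry for estimating `θ ∈ ℝ^K` from `Φ x(θ)` in complex AWGN
of per-sample variance `σ²`:  `F(Φ,θ)_{m,n} = (2/σ²) Re ⟨Φ ∂x(θ)/∂θ_m, Φ ∂x(θ)/∂θ_n⟩`. -/
noncomputable def FIM {K L N : ℕ} (σ : ℝ) (x : (Fin K → ℝ) → EuclideanSpace ℂ (Fin N))
    (θ : Fin K → ℝ) (Φ : Matrix (Fin L) (Fin N) ℂ) (m n : Fin K) : ℝ :=
  (2 / σ ^ 2) *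
    (inner ℂ (mulVecE Φ (fderiv ℝ x θ (Pi.single m 1)))
      (mulVecE Φ (fderiv ℝ x θ (Pi.single n 1))) : ℂ).re

theorem mulVecE_eq_toLpLin {M N : ℕ} (A : Matrix (Fin M) (Fin N) ℂ)
    (v : EuclideanSpace ℂ (Fin N)) :
    mulVecE A v = Matrix.toLpLin 2 2 A v :=
  rfl

@[simp]
theorem mulVecE_one {N : ℕ} (v : EuclideanSpace ℂ (Fin N)) :
    mulVecE (1 : Matrix (Fin N) (Fin N) ℂ) v = v := by
  rw [mulVecE_eq_toLpLin, Matrix.toLpLin_one, LinearMap.id_apply]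

@[simp]
theorem mulVecE_zero {M N : ℕ} (A : Matrix (Fin M) (Fin N) ℂ) : mulVecE A 0 = 0 := by
  rw [mulVecE_eq_toLpLin, map_zero]

theorem mulVecE_sum_smul {ι : Type*} {M N : ℕ} [Fintype ι] (A : Matrix (Fin M) (Fin N) ℂ)
    (d : ι → EuclideanSpace ℂ (Fin N)) (a : ι → ℝ) :
    mulVecE A (∑ k, a k • d k) = ∑ k, a k • mulVecE A (d k) := by
  simp only [mulVecE_eq_toLpLin, map_sum, LinearMap.map_smul_of_tower]

theorem sum_sum_mul_re_inner_mul_eq_norm_sq {E ι : Type*} [NormedAddCommGroup E]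
    [InnerProductSpace ℂ E] [Fintype ι] (w : ι → E) (a : ι → ℝ) :
    ∑ m, ∑ n, a m * (inner ℂ (w m) (w n)).re * a n = ‖∑ k, a k • w k‖ ^ 2 := by
  rw [← inner_self_eq_norm_sq (𝕜 := ℂ), sum_inner, map_sum]
  refine Finset.sum_congr rfl fun m _ => ?_
  rw [inner_sum, map_sum]
  refine Finset.sum_congr rfl fun n _ => ?_
  rw [RCLike.real_smul_eq_coe_smul (K := ℂ), RCLike.real_smul_eq_coe_smul (K := ℂ),
    inner_smul_left, inner_smul_right, RCLike.conj_ofReal, RCLike.re_ofReal_mul,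
    RCLike.re_ofReal_mul, RCLike.re_to_complex]
  ring

theorem sum_sum_mul_FIM_mul {K L N : ℕ} (σ : ℝ) (x : (Fin K → ℝ) → EuclideanSpace ℂ (Fin N))
    (θ : Fin K → ℝ) (Φ : Matrix (Fin L) (Fin N) ℂ) (a : Fin K → ℝ) :
    ∑ m, ∑ n, a m * FIM σ x θ Φ m n * a n
      = 2 / σ ^ 2 * ‖mulVecE Φ (∑ k, a k • fderiv ℝ x θ (Pi.single k 1))‖ ^ 2 := by
  rw [mulVecE_sum_smul, ← sum_sum_mul_re_inner_mul_eq_norm_sq, Finset.mul_sum]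
  refine Finset.sum_congr rfl fun m _ => ?_
  rw [Finset.mul_sum]
  refine Finset.sum_congr rfl fun n _ => ?_
  simp only [FIM]
  ring

theorem sq_mul_sq_le_sq_of_le_div {a b c : ℝ} (hc : 0 ≤ c) (hb : 0 < b) (h : c ≤ a / b) :
    c ^ 2 * b ^ 2 ≤ a ^ 2 := by
  rw [← mul_pow]
  exact pow_le_pow_left₀ (by positivity) ((le_div_iff₀ hb).1 h) 2

theorem sq_le_sq_mul_sq_of_div_le {a b c : ℝ} (ha : 0 ≤ a) (hb : 0 < b) (h : a / b ≤ c) :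
    a ^ 2 ≤ c ^ 2 * b ^ 2 := by
  rw [← mul_pow]
  exact pow_le_pow_left₀ ha ((div_le_iff₀ hb).1 h) 2

theorem stmt0_general {K M N : ℕ}
    (x : (Fin K → ℝ) → EuclideanSpace ℂ (Fin N)) (θ : Fin K → ℝ) (σ : ℝ) (ε : ℝ) (hε1 : ε < 1)
    (A : Matrix (Fin M) (Fin N) ℂ)
    (hiso : ∀ a : Fin K → ℝ,
      (∑ k, a k • fderiv ℝ x θ (Pi.single k 1)) ≠ 0 →
        Real.sqrt ((M : ℝ) / N) * (1 - ε) ≤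
            ‖mulVecE A (∑ k, a k • fderiv ℝ x θ (Pi.single k 1))‖ /
              ‖∑ k, a k • fderiv ℝ x θ (Pi.single k 1)‖ ∧
          ‖mulVecE A (∑ k, a k • fderiv ℝ x θ (Pi.single k 1))‖ /
              ‖∑ k, a k • fderiv ℝ x θ (Pi.single k 1)‖ ≤
            Real.sqrt ((M : ℝ) / N) * (1 + ε)) :
    ∀ a : Fin K → ℝ,
      ((M : ℝ) / N) * (1 - ε) ^ 2 *
          ∑ m, ∑ n, a m * FIM σ x θ (1 : Matrix (Fin N) (Fin N) ℂ) m n * a n ≤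
        ∑ m, ∑ n, a m * FIM σ x θ A m n * a n ∧
      ∑ m, ∑ n, a m * FIM σ x θ A m n * a n ≤
        ((M : ℝ) / N) * (1 + ε) ^ 2 *
          ∑ m, ∑ n, a m * FIM σ x θ (1 : Matrix (Fin N) (Fin N) ℂ) m n * a n := by
  intro a
  rw [sum_sum_mul_FIM_mul, sum_sum_mul_FIM_mul, mulVecE_one]
  set v := ∑ k, a k • fderiv ℝ x θ (Pi.single k 1)
  rcases eq_or_ne v 0 with hv | hv
  · simp [hv]
  obtain ⟨hlo, hhi⟩ := hiso a hv
  have hv_pos : 0 < ‖v‖ := norm_pos_iff.2 hv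
  have hlo_sq :=
    sq_mul_sq_le_sq_of_le_div (mul_nonneg (Real.sqrt_nonneg _) (sub_nonneg.2 hε1.le)) hv_pos hlo
  have hhi_sq := sq_le_sq_mul_sq_of_div_le (norm_nonneg _) hv_pos hhi
  have hMN : Real.sqrt ((M : ℝ) / N) ^ 2 = M / N := Real.sq_sqrt (by positivity)
  rw [mul_pow, hMN] at hlo_sq hhi_sq
  have hσ : 0 ≤ 2 / σ ^ 2 := by positivity
  constructor
  · linarith [mul_le_mul_of_nonneg_left hlo_sq hσ]
  · linarith [mul_le_mul_of_nonneg_left hhi_sq hσ]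

/-- If `A` satisfies the tangent plane `ε`-isometry property at `θ`, then the Fisher
information quadratic forms with compressive measurements are sandwiched between those with
all `N` measurements at an SNR penalty of `M/N`. -/
theorem stmt0 {K M N : ℕ} (Θ : Set (Fin K → ℝ)) (hΘ : IsOpen Θ)
    (x : (Fin K → ℝ) → EuclideanSpace ℂ (Fin N)) (θ : Fin K → ℝ) (hθ : θ ∈ Θ)
    (hx : DifferentiableAt ℝ x θ) (σ : ℝ) (hσ : 0 < σ)
    (ε : ℝ) (hε0 : 0 < ε) (hε1 : ε < 1)
    (A : Matrix (Fin M) (Fin N) ℂ)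
    (hiso : ∀ a : Fin K → ℝ,
      (∑ k, a k • fderiv ℝ x θ (Pi.single k 1)) ≠ 0 →
        Real.sqrt ((M : ℝ) / N) * (1 - ε) ≤
            ‖mulVecE A (∑ k, a k • fderiv ℝ x θ (Pi.single k 1))‖ /
              ‖∑ k, a k • fderiv ℝ x θ (Pi.single k 1)‖ ∧
          ‖mulVecE A (∑ k, a k • fderiv ℝ x θ (Pi.single k 1))‖ /
              ‖∑ k, a k • fderiv ℝ x θ (Pi.single k 1)‖ ≤
            Real.sqrt ((M : ℝ) / N) * (1 + ε)) :
    ∀ a : Fin K → ℝ,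
      ((M : ℝ) / N) * (1 - ε) ^ 2 *
          ∑ m, ∑ n, a m * FIM σ x θ (1 : Matrix (Fin N) (Fin N) ℂ) m n * a n ≤
        ∑ m, ∑ n, a m * FIM σ x θ A m n * a n ∧
      ∑ m, ∑ n, a m * FIM σ x θ A m n * a n ≤
        ((M : ℝ) / N) * (1 + ε) ^ 2 *
          ∑ m, ∑ n, a m * FIM σ x θ (1 : Matrix (Fin N) (Fin N) ℂ) m n * a n :=
  stmt0_general x θ σ ε hε1 A hiso
end

section
/- Let S ⊆ ℂ^N be a linear subspace, let A : ℂ^N → ℂ^M be a linear map, and let 0 < ε < 2/5. Suppose Q is a set of unit vectors in S such that for every x ∈ S with ‖x‖ = 1 there exists q ∈ Q with ‖x − q‖ ≤ ε/4, and suppose 1 − ε ≤ ‖A q‖ ≤ 1 + ε for every q ∈ Q. Then (1 − 2ε)·‖x‖ ≤ ‖A x‖ ≤ (1 + 2ε)·‖x‖ for every x ∈ S. -/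
/-!
Restrict `A` to `S` and let `‖A‖` be the operator norm of the restriction. Writing a unit vector
`x ∈ S` as `q + (x - q)` with `q` in the net gives `‖A‖ ≤ (1 + ε) + ‖A‖ ε / 4`, hence
`‖A‖ ≤ 1 + 2ε`; then `‖A x‖ ≥ ‖A q‖ - ‖A‖ ‖x - q‖ ≥ 1 - ε - (1 + 2ε) ε / 4 ≥ 1 - 2ε`.
Both bounds extend from the unit sphere to all of `S` by homogeneity.
-/

namespace ContinuousLinearMap

variable {𝕜 E F : Type*} [RCLike 𝕜] [NormedAddCommGroup E] [NormedSpace 𝕜 E]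
  [NormedAddCommGroup F] [NormedSpace 𝕜 F] (f : E →L[𝕜] F) {Q : Set E} {δ : ℝ}

theorem mul_norm_le_norm_map_of_unit_norm {c : ℝ} (h : ∀ x, ‖x‖ = 1 → c ≤ ‖f x‖) (x : E) :
    c * ‖x‖ ≤ ‖f x‖ := by
  rcases eq_or_ne x 0 with rfl | hx
  · simp
  have hunit := h _ (norm_smul_inv_norm (𝕜 := 𝕜) hx)
  rw [map_smul, norm_smul, norm_inv, RCLike.norm_ofReal, abs_norm, ← div_eq_inv_mul,
    le_div_iff₀ (norm_pos_iff.2 hx)] at hunit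
  exact hunit

theorem norm_map_le_of_sphere_net {b : ℝ} (hnet : ∀ x, ‖x‖ = 1 → ∃ q ∈ Q, ‖x - q‖ ≤ δ)
    (hQ : ∀ q ∈ Q, ‖f q‖ ≤ b) {x : E} (hx : ‖x‖ = 1) : ‖f x‖ ≤ b + ‖f‖ * δ := by
  obtain ⟨q, hq, hxq⟩ := hnet x hx
  calc ‖f x‖ = ‖f q + f (x - q)‖ := by rw [← map_add, add_sub_cancel]
    _ ≤ ‖f q‖ + ‖f (x - q)‖ := norm_add_le _ _
    _ ≤ b + ‖f‖ * δ := add_le_add (hQ q hq) (f.le_opNorm_of_le hxq)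

theorem le_norm_map_of_sphere_net {a : ℝ} (hnet : ∀ x, ‖x‖ = 1 → ∃ q ∈ Q, ‖x - q‖ ≤ δ)
    (hQ : ∀ q ∈ Q, a ≤ ‖f q‖) {x : E} (hx : ‖x‖ = 1) : a - ‖f‖ * δ ≤ ‖f x‖ := by
  obtain ⟨q, hq, hxq⟩ := hnet x hx
  calc a - ‖f‖ * δ ≤ ‖f q‖ - ‖f (q - x)‖ :=
        sub_le_sub (hQ q hq) (f.le_opNorm_of_le (by rwa [norm_sub_rev]))
    _ ≤ ‖f x‖ := by
        rw [map_sub]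
        exact sub_le_comm.1 (norm_sub_norm_le _ _)

theorem opNorm_le_of_sphere_net {b c : ℝ} (hb : 0 ≤ b) (hδ₀ : 0 ≤ δ) (hδ₁ : δ < 1)
    (hbc : b ≤ c * (1 - δ)) (hnet : ∀ x, ‖x‖ = 1 → ∃ q ∈ Q, ‖x - q‖ ≤ δ)
    (hQ : ∀ q ∈ Q, ‖f q‖ ≤ b) : ‖f‖ ≤ c := by
  have hself : ‖f‖ ≤ b + ‖f‖ * δ :=
    opNorm_le_of_unit_norm (by positivity) fun x hx => f.norm_map_le_of_sphere_net hnet hQ hx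
  nlinarith

theorem norm_map_bounds_of_sphere_net {a b c c' : ℝ} (hb : 0 ≤ b) (hδ₀ : 0 ≤ δ) (hδ₁ : δ < 1)
    (hbc : b ≤ c * (1 - δ)) (hc' : c' ≤ a - c * δ)
    (hnet : ∀ x, ‖x‖ = 1 → ∃ q ∈ Q, ‖x - q‖ ≤ δ) (hQ : ∀ q ∈ Q, a ≤ ‖f q‖ ∧ ‖f q‖ ≤ b)
    (x : E) : c' * ‖x‖ ≤ ‖f x‖ ∧ ‖f x‖ ≤ c * ‖x‖ := by
  have hf : ‖f‖ ≤ c :=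
    f.opNorm_le_of_sphere_net hb hδ₀ hδ₁ hbc hnet fun q hq => (hQ q hq).2
  refine ⟨f.mul_norm_le_norm_map_of_unit_norm (fun y hy => ?_) x, f.le_of_opNorm_le hf x⟩
  calc c' ≤ a - ‖f‖ * δ := by nlinarith
    _ ≤ ‖f y‖ := f.le_norm_map_of_sphere_net hnet (fun q hq => (hQ q hq).1) hy

end ContinuousLinearMap

/-- Net-extension lemma: if `Q` is an `(ε/4)`-net of the unit sphere of a subspace
`S ⊆ ℂ^N` (with `0 < ε < 2/5`) and a linear map `A : ℂ^N → ℂ^M` satisfies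
`1 − ε ≤ ‖A q‖ ≤ 1 + ε` on `Q`, then `(1 − 2ε)‖x‖ ≤ ‖A x‖ ≤ (1 + 2ε)‖x‖` for all
`x ∈ S`. -/
theorem stmt14 {N M : ℕ} (S : Submodule ℂ (EuclideanSpace ℂ (Fin N)))
    (A : EuclideanSpace ℂ (Fin N) →ₗ[ℂ] EuclideanSpace ℂ (Fin M))
    (ε : ℝ) (hε0 : 0 < ε) (hε1 : ε < 2 / 5)
    (Q : Set (EuclideanSpace ℂ (Fin N)))
    (hQunit : ∀ q ∈ Q, q ∈ S ∧ ‖q‖ = 1)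
    (hnet : ∀ x ∈ S, ‖x‖ = 1 → ∃ q ∈ Q, ‖x - q‖ ≤ ε / 4)
    (hQiso : ∀ q ∈ Q, 1 - ε ≤ ‖A q‖ ∧ ‖A q‖ ≤ 1 + ε) :
    ∀ x ∈ S, (1 - 2 * ε) * ‖x‖ ≤ ‖A x‖ ∧ ‖A x‖ ≤ (1 + 2 * ε) * ‖x‖ := by
  intro x hx
  have hnetS : ∀ y : S, ‖y‖ = 1 → ∃ q ∈ Subtype.val ⁻¹' Q, ‖y - q‖ ≤ ε / 4 := by
    intro y hy
    obtain ⟨q, hq, hyq⟩ := hnet y y.2 hy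
    exact ⟨⟨q, (hQunit q hq).1⟩, hq, hyq⟩
  exact (A ∘ₗ S.subtype).toContinuousLinearMap.norm_map_bounds_of_sphere_net
    (by linarith) (by linarith) (by linarith) (by nlinarith) (by nlinarith) hnetS
    (fun q hq => hQiso q hq) ⟨x, hx⟩
end
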